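/- arXiv:math-ph/0507035 — 2 statements merged into one kernel-verified Lean document; each statement's English description precedes it below -/
import Mathlib

section
/- For a Poisson random measure ν with intensity ϱ·Lebesgue on ℝ, with b(x) = ∫u(x-y)ν(dy) for u ∈ L¹(ℝ), and for every δ > 0 and ℓ > 0, the probability ℙ( ∫_{-ℓ}^{ℓ} |b(x)| dx < δ ) is strictly positive. In particular the zero function lies in the topological support of the law of b with respect to local L¹ convergence. -/
open MeasureTheory ProbabilityTheory
open scoped ENNReal

private lemma stmt13_iUnion_Icc : (⋃ n : ℕ, Set.Icc (-(n:ℝ)) (n:ℝ)) = Set.univ := by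
  ext x
  simp only [Set.mem_iUnion, Set.mem_Icc, Set.mem_univ, iff_true]
  obtain ⟨n, hn⟩ := exists_nat_ge |x|
  exact ⟨n, abs_le.mp hn⟩

private lemma stmt13_tail_small (φ : ℝ → ℝ≥0∞) (hφm : Measurable φ)
    (hφ : ∫⁻ z, φ z ≠ ∞) {ε : ℝ≥0∞} (hε : 0 < ε) :
    ∃ s : ℝ, 0 < s ∧ ∫⁻ z in (Set.Icc (-s) s)ᶜ, φ z < ε := by
  set m : Measure ℝ := volume.withDensity φ with hm
  have hmA : ∀ A : Set ℝ, MeasurableSet A → m A = ∫⁻ z in A, φ z := fun A hA =>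
    withDensity_apply φ hA
  have hmfin : m Set.univ ≠ ∞ := by
    rw [hmA Set.univ MeasurableSet.univ, Measure.restrict_univ]; exact hφ
  have hanti : Antitone fun n : ℕ => (Set.Icc (-(n:ℝ)) (n:ℝ))ᶜ := by
    intro i j hij
    exact Set.compl_subset_compl.mpr
      (Set.Icc_subset_Icc (neg_le_neg (by exact_mod_cast hij)) (by exact_mod_cast hij))
  have htend : Filter.Tendsto (fun n : ℕ => m (Set.Icc (-(n:ℝ)) (n:ℝ))ᶜ)
      Filter.atTop (nhds 0) := by
    have h1 : (⋂ n : ℕ, (Set.Icc (-(n:ℝ)) (n:ℝ))ᶜ) = ∅ := by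
      rw [← Set.compl_iUnion, stmt13_iUnion_Icc, Set.compl_univ]
    have h2 := tendsto_measure_iInter_atTop (μ := m)
      (s := fun n : ℕ => (Set.Icc (-(n:ℝ)) (n:ℝ))ᶜ)
      (fun n => (measurableSet_Icc.compl).nullMeasurableSet) hanti
      ⟨0, ne_top_of_le_ne_top hmfin (measure_mono (Set.subset_univ _))⟩
    rwa [h1, measure_empty] at h2
  obtain ⟨n, hn⟩ := (htend.eventually_lt_const hε).exists
  refine ⟨(n : ℝ) + 1, by positivity, ?_⟩
  have hsub : (Set.Icc (-((n:ℝ) + 1)) ((n:ℝ) + 1))ᶜ ⊆ (Set.Icc (-(n:ℝ)) (n:ℝ))ᶜ :=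
    Set.compl_subset_compl.mpr (Set.Icc_subset_Icc (by linarith) (by linarith))
  calc ∫⁻ z in (Set.Icc (-((n:ℝ) + 1)) ((n:ℝ) + 1))ᶜ, φ z
      = m (Set.Icc (-((n:ℝ) + 1)) ((n:ℝ) + 1))ᶜ :=
        (hmA _ measurableSet_Icc.compl).symm
    _ ≤ m (Set.Icc (-(n:ℝ)) (n:ℝ))ᶜ := measure_mono hsub
    _ < ε := hn

private lemma stmt13_lintegral_abs_ne_top {f : ℝ → ℝ} (hf : Integrable f) :
    ∫⁻ z, ENNReal.ofReal |f z| ≠ ∞ := by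
  have h2 := (hasFiniteIntegral_iff_norm f).mp hf.2
  simp only [Real.norm_eq_abs] at h2
  exact h2.ne

/-- for a Poissonian random magnetic field `b_ω(x) = ∫ u(x-y) ν_ω(dy)`
(Poisson random measure of intensity `ϱ·Lebesgue`, encoded by the Campbell formula,
the positivity `ℙ(ν([-r,r]) = 0) > 0`, and the independence of inside/outside data),
the probability `ℙ(∫_{-ℓ}^{ℓ}|b| < δ)` is strictly positive for all `δ, ℓ > 0`;
in particular the zero field lies in the local-`L¹` support of the law of `b`. -/
theorem stmt13 {Ω : Type*} [MeasurableSpace Ω] (P : Measure Ω) [IsProbabilityMeasure P]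
    (ν : Ω → Measure ℝ) (ϱ : ℝ) (hϱ : 0 < ϱ) (u : ℝ → ℝ) (hu : Integrable u)
    (b : Ω → ℝ → ℝ)
    (hb : ∀ ω x, ENNReal.ofReal |b ω x| ≤ ∫⁻ y, ENNReal.ofReal |u (x - y)| ∂(ν ω))
    (hcampbell : ∀ f : ℝ → ℝ≥0∞, Measurable f →
      ∫⁻ ω, (∫⁻ y, f y ∂(ν ω)) ∂P = ENNReal.ofReal ϱ * ∫⁻ y, f y)
    (hzero : ∀ r : ℝ, 0 < r → 0 < P {ω | ν ω (Set.Icc (-r) r) = 0})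
    (hindep : ∀ r : ℝ, 0 < r → ∀ g : ℝ → ℝ≥0∞, Measurable g →
      IndepFun (fun ω => ν ω (Set.Icc (-r) r))
        (fun ω => ∫⁻ y in (Set.Icc (-r) r)ᶜ, g y ∂(ν ω)) P) :
    ∀ δ ℓ : ℝ, 0 < δ → 0 < ℓ →
      0 < P {ω | (∫⁻ x in Set.Icc (-ℓ) ℓ, ENNReal.ofReal |b ω x|) < ENNReal.ofReal δ} := by
  intro δ ℓ hδ hℓ
  -- measurable modification of `u`
  have hasm := hu.aestronglyMeasurable
  set u' : ℝ → ℝ := hasm.mk u with hu'def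
  have hu'sm : StronglyMeasurable u' := hasm.stronglyMeasurable_mk
  have huu' : u =ᵐ[volume] u' := hasm.ae_eq_mk
  obtain ⟨D, hDsub, hDmeas, hD0⟩ := exists_measurable_superset_of_null (ae_iff.mp huu')
  set φ : ℝ → ℝ≥0∞ :=
    fun z => ENNReal.ofReal |u' z| + D.indicator (fun _ => (⊤ : ℝ≥0∞)) z with hφdef
  have hu'm : Measurable fun z => ENNReal.ofReal |u' z| :=
    hu'sm.measurable.abs.ennreal_ofReal
  have hφm : Measurable φ := hu'm.add (measurable_const.indicator hDmeas)
  have hφle : ∀ z, ENNReal.ofReal |u z| ≤ φ z := by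
    intro z
    by_cases hz : z ∈ D
    · simp [hφdef, Set.indicator_of_mem hz]
    · have hzD : u z = u' z := by
        by_contra h; exact hz (hDsub h)
      simp [hφdef, Set.indicator_of_notMem hz, hzD]
  have hφint : ∫⁻ z, φ z ≠ ∞ := by
    rw [hφdef, lintegral_add_left hu'm]
    have h1 : ∫⁻ z, ENNReal.ofReal |u z| = ∫⁻ z, ENNReal.ofReal |u' z| :=
      lintegral_congr_ae (huu'.mono fun z hz => congrArg (fun t => ENNReal.ofReal |t|) hz)
    have h2 : ∫⁻ z, D.indicator (fun _ => (⊤ : ℝ≥0∞)) z ∂volume = 0 := by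
      rw [lintegral_indicator hDmeas, setLIntegral_const, hD0, mul_zero]
    rw [h2, add_zero, ← h1]
    exact stmt13_lintegral_abs_ne_top hu
  -- the auxiliary strictly positive integrable function
  set f₀ : ℝ → ℝ≥0∞ := fun y => ENNReal.ofReal (Real.exp (-(y ^ 2))) with hf₀def
  have hf₀m : Measurable f₀ :=
    (Real.measurable_exp.comp (measurable_id.pow_const 2).neg).ennreal_ofReal
  have hexp : Integrable fun y : ℝ => Real.exp (-(y ^ 2)) := by
    have := integrable_exp_neg_mul_sq (one_pos)
    simpa using this
  have hf₀int : ∫⁻ y, f₀ y ≠ ∞ := by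
    have h := stmt13_lintegral_abs_ne_top hexp
    simpa [hf₀def, Real.abs_exp] using h
  set I₀ : ℝ≥0∞ := ∫⁻ y, f₀ y with hI₀def
  -- constants
  set ε₀ : ℝ := (δ / 4) / (ϱ * (2 * ℓ)) with hε₀def
  have hε₀ : 0 < ε₀ := by positivity
  obtain ⟨s, hs, htail⟩ := stmt13_tail_small φ hφm hφint (ENNReal.ofReal_pos.mpr hε₀)
  set r : ℝ := ℓ + s with hrdef
  have hr : 0 < r := by positivity
  set S : Set ℝ := Set.Icc (-r) r with hSdef
  set T : Set ℝ := Set.Icc (-ℓ) ℓ with hTdef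
  have hI₀top : I₀.toReal + 1 > 0 := by positivity
  set c : ℝ := (δ / 2) / (ϱ * (I₀.toReal + 1)) with hcdef
  have hc : 0 < c := by positivity
  -- the comparison function g and g'
  have hsubm : Measurable (Function.uncurry fun x y : ℝ => φ (x - y)) :=
    hφm.comp (measurable_fst.sub measurable_snd)
  set g : ℝ → ℝ≥0∞ := fun y => ∫⁻ x in T, φ (x - y) with hgdef
  have hgm : Measurable g :=
    Measurable.lintegral_prod_left (μ := volume.restrict T) hsubm
  set g' : ℝ → ℝ≥0∞ := fun y => g y + ENNReal.ofReal c * f₀ y with hg'def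
  have hg'm : Measurable g' := hgm.add (hf₀m.const_mul _)
  -- the tail estimate for g
  have hgtail : (∫⁻ y in Sᶜ, g y) ≤ ENNReal.ofReal ε₀ * ENNReal.ofReal (2 * ℓ) := by
    have hswap : (∫⁻ y in Sᶜ, g y) = ∫⁻ x in T, ∫⁻ y in Sᶜ, φ (x - y) :=
      (lintegral_lintegral_swap
        (μ := volume.restrict T) (ν := volume.restrict Sᶜ) hsubm.aemeasurable).symm
    rw [hswap]
    have hub : ∀ x ∈ T, (∫⁻ y in Sᶜ, φ (x - y)) ≤ ENNReal.ofReal ε₀ := by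
      intro x hx
      rw [hTdef, Set.mem_Icc] at hx
      set ψ : ℝ → ℝ≥0∞ := (Set.Icc (-s) s)ᶜ.indicator φ with hψdef
      have hψm : Measurable ψ := hφm.indicator measurableSet_Icc.compl
      have hcong : (∫⁻ y in Sᶜ, φ (x - y)) = ∫⁻ y in Sᶜ, ψ (x - y) := by
        refine setLIntegral_congr_fun measurableSet_Icc.compl
          (fun y hy => ?_)
        have hmem : x - y ∈ (Set.Icc (-s) s)ᶜ := by
          rw [hSdef, Set.mem_compl_iff, Set.mem_Icc, not_and_or, not_le, not_le] at hy
          rw [Set.mem_compl_iff, Set.mem_Icc, not_and_or, not_le, not_le]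
          rcases hy with hy | hy
          · right; rw [hrdef] at hy; linarith
          · left; rw [hrdef] at hy; linarith
        rw [hψdef, Set.indicator_of_mem hmem]
      rw [hcong]
      calc (∫⁻ y in Sᶜ, ψ (x - y)) ≤ ∫⁻ y, ψ (x - y) := setLIntegral_le_lintegral _ _
        _ = ∫⁻ z, ψ z := (Measure.measurePreserving_sub_left volume x).lintegral_comp hψm
        _ = ∫⁻ z in (Set.Icc (-s) s)ᶜ, φ z := lintegral_indicator measurableSet_Icc.compl φ
        _ ≤ ENNReal.ofReal ε₀ := htail.le
    calc (∫⁻ x in T, ∫⁻ y in Sᶜ, φ (x - y))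
        ≤ ∫⁻ _ in T, ENNReal.ofReal ε₀ := setLIntegral_mono measurable_const hub
      _ = ENNReal.ofReal ε₀ * volume T := setLIntegral_const _ _
      _ = ENNReal.ofReal ε₀ * ENNReal.ofReal (2 * ℓ) := by
          rw [hTdef, Real.volume_Icc]; congr 1; ring
  -- the functional X and its expectation
  set X : Ω → ℝ≥0∞ := fun ω => ∫⁻ y in Sᶜ, g' y ∂(ν ω) with hXdef
  have hEX : ∫⁻ ω, X ω ∂P < ENNReal.ofReal δ := by
    have hcamp := hcampbell (Sᶜ.indicator g') (hg'm.indicator measurableSet_Icc.compl)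
    have h1 : (∫⁻ ω, X ω ∂P) = ENNReal.ofReal ϱ * ∫⁻ y in Sᶜ, g' y := by
      rw [← lintegral_indicator (measurableSet_Icc.compl) g', ← hcamp]
      exact lintegral_congr fun ω => by
        rw [lintegral_indicator (measurableSet_Icc.compl) g']
    have h2 : (∫⁻ y in Sᶜ, g' y) ≤
        ENNReal.ofReal ε₀ * ENNReal.ofReal (2 * ℓ) + ENNReal.ofReal c * I₀ := by
      rw [hg'def]
      rw [lintegral_add_left hgm]
      refine add_le_add hgtail ?_
      calc (∫⁻ y in Sᶜ, ENNReal.ofReal c * f₀ y)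
          ≤ ∫⁻ y, ENNReal.ofReal c * f₀ y := setLIntegral_le_lintegral _ _
        _ = ENNReal.ofReal c * I₀ := by rw [lintegral_const_mul _ hf₀m]
    have hI₀le : I₀ ≤ ENNReal.ofReal (I₀.toReal + 1) := by
      calc I₀ = ENNReal.ofReal I₀.toReal := (ENNReal.ofReal_toReal hf₀int).symm
        _ ≤ ENNReal.ofReal (I₀.toReal + 1) := ENNReal.ofReal_le_ofReal (by linarith)
    have hterm1 : ENNReal.ofReal ϱ * (ENNReal.ofReal ε₀ * ENNReal.ofReal (2 * ℓ))
        = ENNReal.ofReal (δ / 4) := by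
      rw [← ENNReal.ofReal_mul hε₀.le, ← ENNReal.ofReal_mul hϱ.le]
      congr 1
      rw [hε₀def]
      field_simp
    have hterm2 : ENNReal.ofReal ϱ * (ENNReal.ofReal c * ENNReal.ofReal (I₀.toReal + 1))
        = ENNReal.ofReal (δ / 2) := by
      rw [← ENNReal.ofReal_mul hc.le, ← ENNReal.ofReal_mul hϱ.le]
      congr 1
      rw [hcdef]
      field_simp
    calc ∫⁻ ω, X ω ∂P = ENNReal.ofReal ϱ * ∫⁻ y in Sᶜ, g' y := h1
      _ ≤ ENNReal.ofReal ϱ *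
          (ENNReal.ofReal ε₀ * ENNReal.ofReal (2 * ℓ) + ENNReal.ofReal c * I₀) := by
            exact mul_le_mul_right h2 _
      _ = ENNReal.ofReal ϱ * (ENNReal.ofReal ε₀ * ENNReal.ofReal (2 * ℓ))
          + ENNReal.ofReal ϱ * (ENNReal.ofReal c * I₀) := by rw [mul_add]
      _ ≤ ENNReal.ofReal (δ / 4)
          + ENNReal.ofReal ϱ * (ENNReal.ofReal c * ENNReal.ofReal (I₀.toReal + 1)) := by
            rw [hterm1]
            exact add_le_add le_rfl (mul_le_mul_right (mul_le_mul_right hI₀le _) _)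
      _ = ENNReal.ofReal (δ / 4) + ENNReal.ofReal (δ / 2) := by rw [hterm2]
      _ = ENNReal.ofReal (δ / 4 + δ / 2) := (ENNReal.ofReal_add (by positivity) (by positivity)).symm
      _ < ENNReal.ofReal δ := (ENNReal.ofReal_lt_ofReal_iff hδ).mpr (by linarith)
  -- positivity of P(B)
  set B : Set Ω := X ⁻¹' Set.Iio (ENNReal.ofReal δ) with hBdef
  have hPB : 0 < P B := by
    rcases (zero_le : 0 ≤ P B).lt_or_eq with h | h
    · exact h
    exfalso
    obtain ⟨N, hBN, hNm, hN0⟩ := exists_measurable_superset_of_null h.symm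
    have hineq : (∫⁻ ω, (Nᶜ).indicator (fun _ => ENNReal.ofReal δ) ω ∂P) ≤ ∫⁻ ω, X ω ∂P := by
      refine lintegral_mono fun ω => ?_
      by_cases hω : ω ∈ Nᶜ
      · rw [Set.indicator_of_mem hω]
        refine not_lt.mp fun hlt => hω ?_
        exact hBN (show ω ∈ B from hlt)
      · rw [Set.indicator_of_notMem hω]; exact zero_le
    rw [lintegral_indicator hNm.compl, setLIntegral_const,
      measure_compl hNm (measure_ne_top P N), hN0, measure_univ, tsub_zero, mul_one] at hineq
    exact absurd (hineq.trans_lt hEX) (lt_irrefl _)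
  -- positivity of P(A)
  set A : Set Ω := (fun ω => ν ω S) ⁻¹' {0} with hAdef
  have hPA : 0 < P A := by
    have h := hzero r hr
    have hAeq : A = {ω | ν ω S = 0} := by
      ext ω; simp [hAdef]
    rw [hAeq]
    exact h
  -- independence
  have hind := (hindep r hr g' hg'm).measure_inter_preimage_eq_mul
    {0} (Set.Iio (ENNReal.ofReal δ)) (measurableSet_singleton 0) measurableSet_Iio
  have hAB : 0 < P (A ∩ B) := by
    rw [hAdef, hBdef, hXdef, hind]
    exact ENNReal.mul_pos (by rw [hAdef] at hPA; exact hPA.ne') (by rw [hBdef, hXdef] at hPB; exact hPB.ne')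
  -- the inclusion A ∩ B ⊆ target
  have hsub : A ∩ B ⊆
      {ω | (∫⁻ x in Set.Icc (-ℓ) ℓ, ENNReal.ofReal |b ω x|) < ENNReal.ofReal δ} := by
    rintro ω ⟨hA1, hB1⟩
    have hνS : ν ω S = 0 := by simpa [hAdef] using hA1
    have hXω : X ω < ENNReal.ofReal δ := hB1
    -- finiteness of ∫ f₀ dν ω, hence σ-finiteness of ν ω
    have hf₀ν : ∫⁻ y, f₀ y ∂(ν ω) ≠ ∞ := by
      have h1 : (∫⁻ y in Sᶜ, ENNReal.ofReal c * f₀ y ∂(ν ω)) ≤ X ω :=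
        lintegral_mono fun y => le_add_self
      rw [lintegral_const_mul _ hf₀m] at h1
      have h2 : ∫⁻ y in Sᶜ, f₀ y ∂(ν ω) ≠ ∞ := by
        intro htop
        rw [htop, ENNReal.mul_top (ENNReal.ofReal_pos.mpr hc).ne'] at h1
        exact not_top_lt (top_le_iff.mp h1 ▸ hXω)
      have h3 := lintegral_add_compl f₀ (measurableSet_Icc (a := -r) (b := r)) (μ := ν ω)
      rw [← h3, setLIntegral_measure_zero _ _ hνS, zero_add]
      exact h2
    haveI : SigmaFinite (ν ω) := by
      refine ⟨⟨⟨fun n => Set.Icc (-(n:ℝ)) n, fun _ => trivial, fun n => ?_, stmt13_iUnion_Icc⟩⟩⟩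
      by_contra htop
      rw [not_lt, top_le_iff] at htop
      have hn0 : (0 : ℝ≥0∞) < ENNReal.ofReal (Real.exp (-((n:ℝ) ^ 2))) :=
        ENNReal.ofReal_pos.mpr (Real.exp_pos _)
      have hlow : ENNReal.ofReal (Real.exp (-((n:ℝ) ^ 2))) * ν ω (Set.Icc (-(n:ℝ)) n)
          ≤ ∫⁻ y in Set.Icc (-(n:ℝ)) n, f₀ y ∂(ν ω) := by
        rw [← setLIntegral_const]
        refine setLIntegral_mono hf₀m fun y hy => ?_
        rw [Set.mem_Icc] at hy
        exact ENNReal.ofReal_le_ofReal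
          (Real.exp_le_exp.mpr (neg_le_neg (sq_le_sq' hy.1 hy.2)))
      have hfin : (∫⁻ y in Set.Icc (-(n:ℝ)) n, f₀ y ∂(ν ω)) < ∞ :=
        lt_of_le_of_lt (setLIntegral_le_lintegral _ _) (lt_top_iff_ne_top.mpr hf₀ν)
      rw [htop, ENNReal.mul_top hn0.ne'] at hlow
      exact absurd (lt_of_le_of_lt hlow hfin) (lt_irrefl _)
    -- the chain of estimates
    have step1 : (∫⁻ x in T, ENNReal.ofReal |b ω x|) ≤ ∫⁻ x in T, ∫⁻ y, φ (x - y) ∂(ν ω) :=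
      lintegral_mono fun x => (hb ω x).trans (lintegral_mono fun y => hφle _)
    have step2 : (∫⁻ x in T, ∫⁻ y, φ (x - y) ∂(ν ω))
        = ∫⁻ x in T, ∫⁻ y in Sᶜ, φ (x - y) ∂(ν ω) := by
      refine lintegral_congr fun x => ?_
      rw [← lintegral_add_compl (fun y => φ (x - y))
        (measurableSet_Icc (a := -r) (b := r)) (μ := ν ω),
        setLIntegral_measure_zero _ _ hνS, zero_add]
    have step3 : (∫⁻ x in T, ∫⁻ y in Sᶜ, φ (x - y) ∂(ν ω)) = ∫⁻ y in Sᶜ, g y ∂(ν ω) :=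
      lintegral_lintegral_swap
        (μ := volume.restrict T) (ν := (ν ω).restrict Sᶜ) hsubm.aemeasurable
    have step4 : (∫⁻ y in Sᶜ, g y ∂(ν ω)) ≤ X ω := lintegral_mono fun y => le_self_add
    show (∫⁻ x in T, ENNReal.ofReal |b ω x|) < ENNReal.ofReal δ
    exact lt_of_le_of_lt (((step1.trans_eq step2).trans_eq step3).trans step4) hXω
  exact lt_of_lt_of_le hAB (measure_mono hsub)
end

section
/- Let (γ_j)_{j∈ℕ₀} be independent real Gaussian random variables with mean zero and variances c_j > 0 satisfying ∑_j c_j < ∞, and let (t_j) be a real square-summable sequence. Then for every δ > 0, ℙ( ∑_{j=0}^∞ |γ_j - t_j|² < δ² ) > 0. -/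
open MeasureTheory ProbabilityTheory
open Real Filter

noncomputable def stmt15K : ENNReal := ∫⁻ x, ENNReal.ofReal (x ^ 2) ∂(gaussianReal 0 1)

lemma stmt15K_lt_top : stmt15K < ⊤ := by
  have h1 : (1 : NNReal) ≠ 0 := one_ne_zero
  rw [stmt15K, gaussianReal_of_var_ne_zero 0 h1,
    lintegral_withDensity_eq_lintegral_mul _ (measurable_gaussianPDF 0 1)
      (by fun_prop : Measurable fun x : ℝ => ENNReal.ofReal (x ^ 2))]
  have h2 : Integrable (fun x : ℝ => x ^ (2:ℝ) * Real.exp (-(2⁻¹) * x ^ 2)) :=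
    integrable_rpow_mul_exp_neg_mul_sq (by norm_num) (by norm_num)
  simp_rw [Real.rpow_two] at h2
  have hint : Integrable (fun x : ℝ => gaussianPDFReal 0 1 x * x ^ 2) := by
    refine (h2.const_mul ((Real.sqrt (2 * π))⁻¹)).congr (ae_of_all _ fun x => ?_)
    unfold gaussianPDFReal
    push_cast
    rw [show -(x - 0) ^ 2 / (2 * 1) = -(2⁻¹) * x ^ 2 by ring, show 2 * π * 1 = 2 * π by ring]
    ring
  have := hint.lintegral_lt_top
  refine lt_of_le_of_lt (le_of_eq ?_) this
  refine lintegral_congr fun x => ?_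
  simp only [Pi.mul_apply, gaussianPDF]
  rw [← ENNReal.ofReal_mul (gaussianPDFReal_nonneg 0 1 x)]

lemma stmt15_moment (v : NNReal) :
    ∫⁻ x, ENNReal.ofReal (x ^ 2) ∂(gaussianReal 0 v) = stmt15K * v := by
  by_cases hv : v = 0
  · subst hv
    simp [lintegral_dirac]
  · have hvpos : (0:ℝ) < v := by exact_mod_cast (zero_le : (0:NNReal) ≤ v).lt_of_ne (Ne.symm hv)
    have hmap := gaussianReal_map_const_mul (μ := 0) (v := 1) (Real.sqrt v)
    have hveq : (NNReal.mk ((Real.sqrt v) ^ 2) (sq_nonneg _) * 1 : NNReal) = v := by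
      ext
      simp [Real.sq_sqrt v.coe_nonneg]
    rw [mul_zero, hveq] at hmap
    rw [← hmap, lintegral_map (by fun_prop : Measurable fun x : ℝ => ENNReal.ofReal (x ^ 2))
      (by fun_prop : Measurable fun x : ℝ => Real.sqrt v * x)]
    simp_rw [mul_pow, Real.sq_sqrt v.coe_nonneg,
      ENNReal.ofReal_mul v.coe_nonneg, ENNReal.ofReal_coe_nnreal]
    rw [lintegral_const_mul _ (by fun_prop : Measurable fun x : ℝ => ENNReal.ofReal (x ^ 2)), stmt15K, mul_comm]

lemma stmt15_gauss_pos (μ : ℝ) {v : NNReal} (hv : v ≠ 0) {a b : ℝ} (hab : a < b) :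
    0 < gaussianReal μ v (Set.Ioo a b) := by
  rw [gaussianReal_apply μ hv]
  refine (lintegral_pos_iff_support (measurable_gaussianPDF μ v)).2 ?_
  have hs : Function.support (gaussianPDF μ v) = Set.univ := by
    ext x
    simp only [Function.mem_support, Set.mem_univ, iff_true]
    exact (gaussianPDF_pos μ hv x).ne'
  rw [hs, Measure.restrict_apply_univ]
  simp [Real.volume_Ioo, hab, sub_pos.2 hab]

lemma stmt15_summable_and_tsum_lt {f : ℕ → ℝ} (hf : ∀ n, 0 ≤ f n) {b : ℝ}
    (h : (∑' n, ENNReal.ofReal (f n)) < ENNReal.ofReal b) :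
    Summable f ∧ (∑' n, f n) < b := by
  have hne : (∑' n, ENNReal.ofReal (f n)) ≠ ⊤ := (h.trans_le le_top).ne
  have hsum : Summable f := by
    have h2 : Summable fun n => (f n).toNNReal :=
      ENNReal.tsum_coe_ne_top_iff_summable.1 (by simpa [ENNReal.ofReal] using hne)
    exact (NNReal.summable_coe.2 h2).congr fun n => Real.coe_toNNReal _ (hf n)
  refine ⟨hsum, ?_⟩
  rw [← ENNReal.ofReal_tsum_of_nonneg hf hsum] at h
  exact (ENNReal.ofReal_lt_ofReal_iff_of_nonneg (tsum_nonneg hf)).1 h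

set_option maxHeartbeats 1600000 in
/-- for independent centred Gaussians `γ_j` with variances `c_j > 0`,
`∑ c_j < ∞`, and a square-summable shift `(t_j)`, the ball event
`∑_j |γ_j - t_j|² < δ²` has strictly positive probability for every `δ > 0`. -/
theorem stmt15 {Ω : Type*} [MeasurableSpace Ω] (P : Measure Ω) [IsProbabilityMeasure P]
    (γ : ℕ → Ω → ℝ) (hmeas : ∀ j, Measurable (γ j))
    (c : ℕ → NNReal) (hc : ∀ j, 0 < c j)
    (hlaw : ∀ j, Measure.map (γ j) P = gaussianReal 0 (c j))
    (hindep : iIndepFun γ P)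
    (hcsum : Summable fun j => (c j : ℝ))
    (t : ℕ → ℝ) (ht : Summable fun j => t j ^ 2) :
    ∀ δ : ℝ, 0 < δ →
      0 < P {ω | Summable (fun j => (γ j ω - t j) ^ 2) ∧
        (∑' j, (γ j ω - t j) ^ 2) < δ ^ 2} := by
  intro δ hδ
  have hKtop := stmt15K_lt_top
  have hδ2 : (0:ℝ) < δ ^ 2 / 16 := by positivity
  have hKt : (0:ℝ) ≤ stmt15K.toReal := ENNReal.toReal_nonneg
  set r : ℝ := (δ ^ 2 / 16) / (stmt15K.toReal + 1) with hr
  have hrpos : 0 < r := by positivity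
  -- choose the splitting index m
  have h1 : Tendsto (fun m => ∑' j, t (j + m) ^ 2) atTop (nhds 0) :=
    tendsto_sum_nat_add (fun n => t n ^ 2)
  have h2 : Tendsto (fun m => ∑' j, ((c (j + m) : ℝ))) atTop (nhds 0) :=
    tendsto_sum_nat_add (fun n => (c n : ℝ))
  obtain ⟨m, hm1, hm2⟩ : ∃ m, (∑' j, t (j + m) ^ 2) < δ ^ 2 / 16 ∧
      (∑' j, ((c (j + m) : ℝ))) < r :=
    ((h1.eventually_lt_const hδ2).and (h2.eventually_lt_const hrpos)).exists
  set η : ℝ := δ / (2 * ((m : ℝ) + 1)) with hη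
  have hηpos : 0 < η := by positivity
  set E : Set Ω := ⋂ j ∈ Finset.range m, (γ j) ⁻¹' (Set.Ioo (t j - η) (t j + η)) with hE
  set g : Ω → ENNReal := fun ω => ∑' j, ENNReal.ofReal ((γ (j + m) ω) ^ 2) with hg
  set T : Set Ω := {ω | g ω < ENNReal.ofReal (δ ^ 2 / 16)} with hT
  have hgmeas : Measurable g :=
    Measurable.ennreal_tsum fun j => ((hmeas (j + m)).pow_const 2).ennreal_ofReal
  -- P E > 0
  have hPE : P E = ∏ j ∈ Finset.range m, P ((γ j) ⁻¹' (Set.Ioo (t j - η) (t j + η))) :=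
    hindep.meas_biInter fun j _ => ⟨Set.Ioo (t j - η) (t j + η), measurableSet_Ioo, rfl⟩
  have hEpos : 0 < P E := by
    rw [hPE]
    refine CanonicallyOrderedAdd.prod_pos.2 fun j _ => ?_
    rw [← Measure.map_apply (hmeas j) measurableSet_Ioo, hlaw j]
    exact stmt15_gauss_pos 0 (hc j).ne' (by linarith)
  -- Markov bound: P T > 0
  have hlint : ∫⁻ ω, g ω ∂P < ENNReal.ofReal (δ ^ 2 / 16) := by
    rw [hg]
    rw [lintegral_tsum fun j => (((hmeas (j + m)).pow_const 2).ennreal_ofReal).aemeasurable]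
    have heach : ∀ j, ∫⁻ ω, ENNReal.ofReal ((γ (j + m) ω) ^ 2) ∂P = stmt15K * (c (j + m)) := by
      intro j
      have hstep : ∫⁻ ω, ENNReal.ofReal ((γ (j + m) ω) ^ 2) ∂P =
          ∫⁻ x, ENNReal.ofReal (x ^ 2) ∂(Measure.map (γ (j + m)) P) :=
        (lintegral_map (by fun_prop : Measurable fun x : ℝ => ENNReal.ofReal (x ^ 2))
          (hmeas (j + m))).symm
      rw [hstep, hlaw (j + m), stmt15_moment]
    simp_rw [heach]
    rw [ENNReal.tsum_mul_left]
    have hsum : (∑' j, ((c (j + m) : ENNReal))) = ENNReal.ofReal (∑' j, ((c (j + m)) : ℝ)) := by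
      rw [ENNReal.ofReal_tsum_of_nonneg (fun j => (c (j + m)).coe_nonneg)
        ((summable_nat_add_iff m).2 hcsum)]
      simp [ENNReal.ofReal_coe_nnreal]
    rw [hsum]
    have hKr : stmt15K.toReal * r < δ ^ 2 / 16 := by
      have hre : r * (stmt15K.toReal + 1) = δ ^ 2 / 16 := div_mul_cancel₀ _ (by positivity)
      nlinarith
    calc stmt15K * ENNReal.ofReal (∑' j, ((c (j + m)) : ℝ))
        ≤ stmt15K * ENNReal.ofReal r := by gcongr
      _ = ENNReal.ofReal (stmt15K.toReal * r) := by
          rw [ENNReal.ofReal_mul hKt, ENNReal.ofReal_toReal hKtop.ne]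
      _ < ENNReal.ofReal (δ ^ 2 / 16) := (ENNReal.ofReal_lt_ofReal_iff hδ2).2 hKr
  have hTc : P {ω | ENNReal.ofReal (δ ^ 2 / 16) ≤ g ω} < 1 := by
    have hne0 : ENNReal.ofReal (δ ^ 2 / 16) ≠ 0 := by
      simp [ENNReal.ofReal_eq_zero, not_le, hδ2]
    refine lt_of_le_of_lt
      (meas_ge_le_lintegral_div hgmeas.aemeasurable hne0 ENNReal.ofReal_ne_top) ?_
    rw [ENNReal.div_lt_iff (Or.inl hne0) (Or.inl ENNReal.ofReal_ne_top), one_mul]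
    exact hlint
  have hTmeas : MeasurableSet T := hgmeas measurableSet_Iio
  have hTpos : 0 < P T := by
    rcases (zero_le : (0:ENNReal) ≤ P T).lt_or_eq with h | h
    · exact h
    · exfalso
      have hcompl : P Tᶜ = 1 := by
        rw [measure_compl hTmeas (measure_ne_top _ _), ← h, tsub_zero, measure_univ]
      have : Tᶜ = {ω | ENNReal.ofReal (δ ^ 2 / 16) ≤ g ω} := by
        ext ω; simp [hT, not_lt]
      rw [← this] at hTc
      rw [hcompl] at hTc
      exact lt_irrefl 1 hTc
  -- independence of E and T
  have hIndep : Indep (⨆ i ∈ {i : ℕ | i < m}, MeasurableSpace.comap (γ i) Real.measurableSpace)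
      (⨆ i ∈ {i : ℕ | m ≤ i}, MeasurableSpace.comap (γ i) Real.measurableSpace) P := by
    refine indep_iSup_of_disjoint (fun i => (hmeas i).comap_le) hindep.iIndep ?_
    refine Set.disjoint_left.2 fun i hi hi' => ?_
    simp only [Set.mem_setOf_eq] at hi hi'
    omega
  have hEmeas' : MeasurableSet[⨆ i ∈ {i : ℕ | i < m},
      MeasurableSpace.comap (γ i) Real.measurableSpace] E := by
    refine Finset.measurableSet_biInter _ fun j hj => ?_
    have hle : MeasurableSpace.comap (γ j) Real.measurableSpace ≤
        ⨆ i ∈ {i : ℕ | i < m}, MeasurableSpace.comap (γ i) Real.measurableSpace :=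
      le_biSup (fun i => MeasurableSpace.comap (γ i) Real.measurableSpace)
        (show j ∈ {i : ℕ | i < m} from Finset.mem_range.1 hj)
    exact hle _ ⟨_, measurableSet_Ioo, rfl⟩
  have hTmeas' : MeasurableSet[⨆ i ∈ {i : ℕ | m ≤ i},
      MeasurableSpace.comap (γ i) Real.measurableSpace] T := by
    have hγ : ∀ j, Measurable[⨆ i ∈ {i : ℕ | m ≤ i},
        MeasurableSpace.comap (γ i) Real.measurableSpace] (γ (j + m)) := fun j =>
      measurable_iff_comap_le.2
        (le_biSup (fun i => MeasurableSpace.comap (γ i) Real.measurableSpace)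
          (show j + m ∈ {i : ℕ | m ≤ i} from Nat.le_add_left m j))
    have hg' : Measurable[⨆ i ∈ {i : ℕ | m ≤ i},
        MeasurableSpace.comap (γ i) Real.measurableSpace] g :=
      Measurable.ennreal_tsum fun j => ((hγ j).pow_const 2).ennreal_ofReal
    exact hg' measurableSet_Iio
  have hmul : P (E ∩ T) = P E * P T :=
    (Indep_iff _ _ _).1 hIndep E T hEmeas' hTmeas'
  have hpos : 0 < P (E ∩ T) := by
    rw [hmul]; exact ENNReal.mul_pos hEpos.ne' hTpos.ne'
  refine hpos.trans_le (measure_mono ?_)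
  rintro ω ⟨hωE, hωT⟩
  -- analysis of the event
  obtain ⟨hsγ, hsumγ⟩ := stmt15_summable_and_tsum_lt (fun j => sq_nonneg (γ (j + m) ω)) hωT
  have ht' : Summable fun j => t (j + m) ^ 2 := (summable_nat_add_iff m).2 ht
  have hbound : ∀ j, (γ (j + m) ω - t (j + m)) ^ 2 ≤
      2 * (γ (j + m) ω) ^ 2 + 2 * t (j + m) ^ 2 := fun j => by
    nlinarith [sq_nonneg (γ (j + m) ω + t (j + m))]
  have hsum_tail : Summable fun j => (γ (j + m) ω - t (j + m)) ^ 2 :=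
    Summable.of_nonneg_of_le (fun j => sq_nonneg _) hbound
      ((hsγ.mul_left 2).add (ht'.mul_left 2))
  have hsumf : Summable fun n => (γ n ω - t n) ^ 2 := (summable_nat_add_iff m).1 hsum_tail
  have htail : (∑' j, (γ (j + m) ω - t (j + m)) ^ 2) ≤ δ ^ 2 / 4 := by
    calc (∑' j, (γ (j + m) ω - t (j + m)) ^ 2)
        ≤ ∑' j, (2 * (γ (j + m) ω) ^ 2 + 2 * t (j + m) ^ 2) :=
          Summable.tsum_le_tsum hbound hsum_tail ((hsγ.mul_left 2).add (ht'.mul_left 2))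
      _ = 2 * (∑' j, (γ (j + m) ω) ^ 2) + 2 * (∑' j, t (j + m) ^ 2) := by
          rw [Summable.tsum_add (hsγ.mul_left 2) (ht'.mul_left 2), tsum_mul_left, tsum_mul_left]
      _ ≤ δ ^ 2 / 4 := by linarith
  have hfront : (∑ j ∈ Finset.range m, (γ j ω - t j) ^ 2) ≤ δ ^ 2 / 4 := by
    have hmem : ∀ j ∈ Finset.range m, (γ j ω - t j) ^ 2 ≤ η ^ 2 := by
      intro j hj
      have := Set.mem_iInter₂.1 hωE j hj
      rcases this with ⟨hlo, hhi⟩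
      exact sq_le_sq' (by linarith) (by linarith)
    calc (∑ j ∈ Finset.range m, (γ j ω - t j) ^ 2)
        ≤ ∑ _j ∈ Finset.range m, η ^ 2 := Finset.sum_le_sum hmem
      _ = (m : ℝ) * η ^ 2 := by rw [Finset.sum_const, Finset.card_range, nsmul_eq_mul]
      _ ≤ δ ^ 2 / 4 := by
          rw [hη, div_pow, ← mul_div_assoc]
          rw [div_le_div_iff₀ (by positivity) (by norm_num)]
          have hm0 : (0:ℝ) ≤ (m : ℝ) := Nat.cast_nonneg m
          nlinarith [sq_nonneg δ, sq_nonneg ((m:ℝ))]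
  refine ⟨hsumf, ?_⟩
  rw [← Summable.sum_add_tsum_nat_add m hsumf]
  have : (0:ℝ) < δ ^ 2 := by positivity
  linarith
end
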